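/- Let A be a bal-algebra and let I, J be archimedean ℓ-ideals of A. If ar(I + J) = A (i.e., the join of I and J in the lattice of archimedean ℓ-ideals is all of A), then already I + J = A. -/

import Mathlib

/-- A bounded archimedean ℓ-algebra (bal-algebra): a commutative ℝ-algebra with a
lattice order compatible with addition and multiplication, in which the algebra
map from ℝ is order-preserving, `1` is a strong order unit, and the order is
archimedean. -/
structure IsBal (A : Type*) [CommRing A] [Lattice A] [Algebra ℝ A] : Prop where
  add_le_add_right : ∀ a b : A, a ≤ b → ∀ c : A, a + c ≤ b + c
  mul_nonneg : ∀ a b : A, 0 ≤ a → 0 ≤ b → 0 ≤ a * b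
  algebraMap_mono : Monotone (algebraMap ℝ A)
  strong_unit : ∀ a : A, ∃ n : ℕ, 1 ≤ n ∧ a ≤ n • (1 : A)
  arch : ∀ a b : A, (∀ n : ℕ, 1 ≤ n → n • a ≤ b) → a ≤ 0

/-- An ℓ-ideal: a ring ideal `I` such that `|a| ≤ |b|` and `b ∈ I` imply `a ∈ I`,
where `|a| = a ⊔ (-a)`. -/
def IsLIdeal {A : Type*} [CommRing A] [Lattice A] (I : Ideal A) : Prop :=
  ∀ a b : A, b ∈ I → a ⊔ -a ≤ b ⊔ -b → a ∈ I

/-- An archimedean ℓ-ideal: whenever `(n • a - b)⁺ ∈ I` for every integer `n ≥ 1`,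
also `a⁺ ∈ I`, where `x⁺ = x ⊔ 0`. -/
def IsArchLIdeal {A : Type*} [CommRing A] [Lattice A] (I : Ideal A) : Prop :=
  ∀ a b : A, (∀ n : ℕ, 1 ≤ n → (n • a - b) ⊔ 0 ∈ I) → a ⊔ 0 ∈ I

/-- The archimedean hull of a subset `S`: the intersection of all archimedean
ℓ-ideals containing `S`. -/
def archHull {A : Type*} [CommRing A] [Lattice A] (S : Set A) : Ideal A :=
  sInf {I : Ideal A | IsLIdeal I ∧ IsArchLIdeal I ∧ S ⊆ ↑I}

/-!
The uniform closure `{a | (|a| - ε)⁺ ∈ L for all real ε > 0}` of an ℓ-ideal `L` is an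
ℓ-ideal containing `L`. It is archimedean because `1` is a strong unit: if `b ≤ m` and
`m + ε ≤ N ε`, then `N • (a - ε) ≤ (N • a - b)⁺ - ε`. Hence it contains `ar(L)`, and if `1` lies
in it, then `(1 - 1/2)⁺ = 1/2 ∈ L`, so `L = A`. It remains to see that `I + J` is an ℓ-ideal,
which is Riesz decomposition: if `0 ≤ u ≤ v + w` with `0 ≤ v, w`, then
`u = u ⊓ v + (u - u ⊓ v)` with `0 ≤ u - u ⊓ v ≤ w`.
-/

theorem nsmul_algebraMap_div {R : Type*} [Semiring R] [Algebra ℝ R] {n : ℕ} (hn : n ≠ 0)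
    (c : ℝ) : n • algebraMap ℝ R (c / n) = algebraMap ℝ R c := by
  rw [← map_nsmul, nsmul_eq_mul, mul_div_cancel₀ c (Nat.cast_ne_zero.mpr hn)]

section

variable {A : Type*} [CommRing A] [Lattice A]

theorem abs_mul_le_abs_mul_abs [IsOrderedRing A] (a b : A) : |a * b| ≤ |a| * |b| := by
  obtain ⟨p, q, hp, hq, rfl, hpq⟩ : ∃ p q : A, 0 ≤ p ∧ 0 ≤ q ∧ a = p - q ∧ |a| = p + q :=
    ⟨a⁺, a⁻, posPart_nonneg a, negPart_nonneg a, (posPart_sub_negPart a).symm,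
      (posPart_add_negPart a).symm⟩
  obtain ⟨r, s, hr, hs, rfl, hrs⟩ : ∃ r s : A, 0 ≤ r ∧ 0 ≤ s ∧ b = r - s ∧ |b| = r + s :=
    ⟨b⁺, b⁻, posPart_nonneg b, negPart_nonneg b, (posPart_sub_negPart b).symm,
      (posPart_add_negPart b).symm⟩
  rw [hpq, hrs, abs_le']
  constructor
  · rw [← sub_nonneg, show (p + q) * (r + s) - (p - q) * (r - s) = 2 * (p * s + q * r) by ring]
    exact mul_nonneg zero_le_two (add_nonneg (mul_nonneg hp hs) (mul_nonneg hq hr))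
  · rw [← sub_nonneg, show (p + q) * (r + s) - -((p - q) * (r - s)) = 2 * (p * r + q * s) by ring]
    exact mul_nonneg zero_le_two (add_nonneg (mul_nonneg hp hr) (mul_nonneg hq hs))

namespace IsLIdeal

variable [IsOrderedAddMonoid A] {I J L : Ideal A}

theorem abs_mem (hL : IsLIdeal L) {a : A} (ha : a ∈ L) : |a| ∈ L :=
  hL _ a ha (abs_abs a).le

theorem mem_of_nonneg_of_le (hL : IsLIdeal L) {u v : A} (hu : 0 ≤ u) (huv : u ≤ v)
    (hv : v ∈ L) : u ∈ L :=
  hL u v hv <| by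
    change |u| ≤ |v|
    rw [abs_of_nonneg hu]
    exact huv.trans (le_abs_self v)

theorem mem_add_of_nonneg_of_le_add (hI : IsLIdeal I) (hJ : IsLIdeal J) {u v w : A}
    (hv : 0 ≤ v) (hw : 0 ≤ w) (hvI : v ∈ I) (hwJ : w ∈ J) (hu : 0 ≤ u) (huvw : u ≤ v + w) :
    u ∈ I + J := by
  have hp : u ⊓ v ∈ I := hI.mem_of_nonneg_of_le (le_inf hu hv) inf_le_right hvI
  have hq : u - u ⊓ v ∈ J := by
    refine hJ.mem_of_nonneg_of_le (sub_nonneg.mpr inf_le_left) ?_ hwJ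
    rw [sub_le_iff_le_add, add_inf]
    exact le_inf (le_add_of_nonneg_left hw) (by rwa [add_comm])
  simpa using Submodule.add_mem_sup hp hq

theorem add (hI : IsLIdeal I) (hJ : IsLIdeal J) : IsLIdeal (I + J) := by
  intro a b hb hab
  obtain ⟨v, hv, w, hw, rfl⟩ := Submodule.mem_sup.mp hb
  have hle : ∀ u, 0 ≤ u → u ≤ |a| → u ∈ I + J := fun u hu hua =>
    mem_add_of_nonneg_of_le_add hI hJ (abs_nonneg v) (abs_nonneg w) (hI.abs_mem hv)
      (hJ.abs_mem hw) hu (hua.trans <| (show |a| ≤ |v + w| from hab).trans (abs_add_le v w))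
  rw [← posPart_sub_negPart a]
  exact sub_mem (hle _ (posPart_nonneg a) (sup_le (le_abs_self a) (abs_nonneg a)))
    (hle _ (negPart_nonneg a) (sup_le (neg_le_abs a) (abs_nonneg a)))

end IsLIdeal

variable [Algebra ℝ A]

namespace IsBal

theorem isOrderedAddMonoid (hA : IsBal A) : IsOrderedAddMonoid A :=
  { add_le_add_left := hA.add_le_add_right }

theorem algebraMap_nonneg (hA : IsBal A) {c : ℝ} (hc : 0 ≤ c) :
    0 ≤ algebraMap ℝ A c := by
  simpa using hA.algebraMap_mono hc

theorem isOrderedRing (hA : IsBal A) : IsOrderedRing A :=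
  have := hA.isOrderedAddMonoid
  have : ZeroLEOneClass A := ⟨by simpa using hA.algebraMap_nonneg zero_le_one⟩
  .of_mul_nonneg hA.mul_nonneg

theorem le_algebraMap_inv_mul_of_nsmul_le (hA : IsBal A) {n : ℕ} (hn : n ≠ 0) {x y : A}
    (h : n • y ≤ x) : y ≤ algebraMap ℝ A (n : ℝ)⁻¹ * x := by
  have := hA.isOrderedRing
  calc y = algebraMap ℝ A (n : ℝ)⁻¹ * (n • y) := by
        rw [nsmul_eq_mul, ← map_natCast (algebraMap ℝ A), ← mul_assoc, ← map_mul,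
          inv_mul_cancel₀ (Nat.cast_ne_zero.mpr hn), map_one, one_mul]
    _ ≤ algebraMap ℝ A (n : ℝ)⁻¹ * x :=
        mul_le_mul_of_nonneg_left h (hA.algebraMap_nonneg (by positivity))

theorem nsmul_sub_algebraMap_le (hA : IsBal A) {a b : A} {m N : ℕ} {ε : ℝ}
    (hb : b ≤ m • 1) (hε : m + ε ≤ N * ε) :
    N • (a - algebraMap ℝ A ε) ≤ (N • a - b)⁺ - algebraMap ℝ A ε := by
  have := hA.isOrderedAddMonoid
  have hbm : b ≤ algebraMap ℝ A m := by rwa [map_natCast, ← nsmul_one]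
  calc N • (a - algebraMap ℝ A ε) = (N • a - b) + (b - algebraMap ℝ A (N * ε)) := by
        simp only [map_mul, map_natCast, nsmul_eq_mul]; ring
    _ ≤ (N • a - b)⁺ + (algebraMap ℝ A m - algebraMap ℝ A (m + ε)) :=
        add_le_add (le_posPart _) (sub_le_sub hbm (hA.algebraMap_mono hε))
    _ = (N • a - b)⁺ - algebraMap ℝ A ε := by rw [map_add]; ring

end IsBal

def uniformClosure (L : Ideal A) : Set A :=
  {a | ∀ ε : ℝ, 0 < ε → (|a| - algebraMap ℝ A ε)⁺ ∈ L}

theorem IsBal.zero_mem_uniformClosure (hA : IsBal A) (L : Ideal A) : 0 ∈ uniformClosure L := by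
  have := hA.isOrderedAddMonoid
  intro ε hε
  rw [abs_zero, zero_sub, posPart_eq_zero.mpr (neg_nonpos.mpr (hA.algebraMap_nonneg hε.le))]
  exact L.zero_mem

theorem IsBal.eq_top_of_one_mem_uniformClosure (hA : IsBal A) {L : Ideal A}
    (h : 1 ∈ uniformClosure L) : L = ⊤ := by
  have := hA.isOrderedRing
  have hhalf : (1 : A) - algebraMap ℝ A (1 / 2) = algebraMap ℝ A (1 / 2) := by
    rw [← map_one (algebraMap ℝ A), ← map_sub]; norm_num
  have hmem := h (1 / 2) one_half_pos
  rw [abs_of_nonneg zero_le_one, hhalf,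
    posPart_eq_self.mpr (hA.algebraMap_nonneg one_half_pos.le)] at hmem
  rw [Ideal.eq_top_iff_one]
  simpa [← map_mul] using L.mul_mem_left (algebraMap ℝ A 2) hmem

theorem IsLIdeal.add_mem_uniformClosure (hA : IsBal A) {L : Ideal A} (hL : IsLIdeal L) {a b : A}
    (ha : a ∈ uniformClosure L) (hb : b ∈ uniformClosure L) : a + b ∈ uniformClosure L := by
  have := hA.isOrderedAddMonoid
  intro ε hε
  set δ := algebraMap ℝ A (ε / 2)
  have hε2 : algebraMap ℝ A ε = δ + δ := by rw [← map_add, add_halves]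
  refine hL.mem_of_nonneg_of_le (posPart_nonneg _) (sup_le ?_ (add_nonneg (posPart_nonneg _)
    (posPart_nonneg _))) (L.add_mem (ha _ (half_pos hε)) (hb _ (half_pos hε)))
  calc |a + b| - algebraMap ℝ A ε ≤ (|a| - δ) + (|b| - δ) := by
        rw [hε2, ← add_sub_add_comm]; exact sub_le_sub_right (abs_add_le a b) _
    _ ≤ (|a| - δ)⁺ + (|b| - δ)⁺ := add_le_add (le_posPart _) (le_posPart _)

theorem IsLIdeal.mul_mem_uniformClosure (hA : IsBal A) {L : Ideal A} (hL : IsLIdeal L) (c : A)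
    {a : A} (ha : a ∈ uniformClosure L) : c * a ∈ uniformClosure L := by
  have := hA.isOrderedRing
  intro ε hε
  obtain ⟨n, hn, hcn⟩ := hA.strong_unit |c|
  have hn0 : n ≠ 0 := Nat.one_le_iff_ne_zero.mp hn
  have hδ : 0 < ε / n := div_pos hε (Nat.cast_pos.mpr hn)
  refine hL.mem_of_nonneg_of_le (posPart_nonneg _) (sup_le ?_ (nsmul_nonneg (posPart_nonneg _) n))
    (nsmul_mem (ha _ hδ) n)
  calc |c * a| - algebraMap ℝ A ε ≤ n • |a| - n • algebraMap ℝ A (ε / n) := by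
        rw [nsmul_algebraMap_div hn0]
        refine sub_le_sub_right ((abs_mul_le_abs_mul_abs c a).trans ?_) _
        rw [nsmul_eq_mul, ← nsmul_one]
        exact mul_le_mul_of_nonneg_right hcn (abs_nonneg a)
    _ = n • (|a| - algebraMap ℝ A (ε / n)) := (nsmul_sub _ _ n).symm
    _ ≤ n • (|a| - algebraMap ℝ A (ε / n))⁺ := nsmul_le_nsmul_right (le_posPart _) n

def IsLIdeal.uniformClosureIdeal (hA : IsBal A) {L : Ideal A} (hL : IsLIdeal L) : Ideal A where
  carrier := uniformClosure L
  zero_mem' := hA.zero_mem_uniformClosure L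
  add_mem' := hL.add_mem_uniformClosure hA
  smul_mem' := hL.mul_mem_uniformClosure hA

namespace IsLIdeal

variable {L : Ideal A}

theorem le_uniformClosureIdeal (hA : IsBal A) (hL : IsLIdeal L) :
    L ≤ hL.uniformClosureIdeal hA := by
  have := hA.isOrderedAddMonoid
  intro a ha ε hε
  exact hL.mem_of_nonneg_of_le (posPart_nonneg _)
    (sup_le (sub_le_self _ (hA.algebraMap_nonneg hε.le)) (abs_nonneg a)) (hL.abs_mem ha)

theorem isLIdeal_uniformClosureIdeal (hA : IsBal A) (hL : IsLIdeal L) :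
    IsLIdeal (hL.uniformClosureIdeal hA) := by
  have := hA.isOrderedAddMonoid
  intro a b hb hab ε hε
  exact hL.mem_of_nonneg_of_le (posPart_nonneg _)
    (posPart_mono (sub_le_sub_right (show |a| ≤ |b| from hab) _)) (hb ε hε)

theorem isArchLIdeal_uniformClosureIdeal (hA : IsBal A) (hL : IsLIdeal L) :
    IsArchLIdeal (hL.uniformClosureIdeal hA) := by
  have := hA.isOrderedRing
  intro a b hab ε hε
  obtain ⟨m, -, hbm⟩ := hA.strong_unit b
  obtain ⟨n, hn⟩ := Archimedean.arch (m : ℝ) hε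
  set x := (((n + 1 : ℕ) • a - b)⁺ - algebraMap ℝ A ε)⁺
  have hx : x ∈ L := by
    have h := hab (n + 1) (Nat.le_add_left 1 n) ε hε
    rwa [abs_of_nonneg le_sup_right] at h
  have hkey : (n + 1) • (a - algebraMap ℝ A ε) ≤ x :=
    (hA.nsmul_sub_algebraMap_le hbm (by push_cast; rw [nsmul_eq_mul] at hn; linarith)).trans
      (le_posPart _)
  have hy := hA.le_algebraMap_inv_mul_of_nsmul_le n.succ_ne_zero hkey
  have hy0 : 0 ≤ algebraMap ℝ A (n + 1 : ℕ)⁻¹ * x :=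
    mul_nonneg (hA.algebraMap_nonneg (by positivity)) (posPart_nonneg _)
  refine hL.mem_of_nonneg_of_le (posPart_nonneg _) (sup_le ?_ hy0) (L.mul_mem_left _ hx)
  rw [abs_of_nonneg le_sup_right, sub_le_iff_le_add]
  exact sup_le (sub_le_iff_le_add.mp hy) (add_nonneg hy0 (hA.algebraMap_nonneg hε.le))

theorem archHull_le_uniformClosureIdeal (hA : IsBal A) (hL : IsLIdeal L) :
    archHull (L : Set A) ≤ hL.uniformClosureIdeal hA :=
  sInf_le ⟨hL.isLIdeal_uniformClosureIdeal hA, hL.isArchLIdeal_uniformClosureIdeal hA,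
    hL.le_uniformClosureIdeal hA⟩

theorem eq_top_of_archHull_eq_top (hA : IsBal A) (hL : IsLIdeal L)
    (h : archHull (L : Set A) = ⊤) : L = ⊤ :=
  hA.eq_top_of_one_mem_uniformClosure <|
    hL.archHull_le_uniformClosureIdeal hA (h ▸ Submodule.mem_top)

end IsLIdeal

end

theorem add_eq_top_of_archHull_add_eq_top_general {A : Type*} [CommRing A] [Lattice A]
    [Algebra ℝ A] (hA : IsBal A) (I J : Ideal A)
    (hI : IsLIdeal I) (hJ : IsLIdeal J)
    (h : archHull ((I + J : Ideal A) : Set A) = ⊤) :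
    I + J = ⊤ :=
  have := hA.isOrderedAddMonoid
  (hI.add hJ).eq_top_of_archHull_eq_top hA h

/-- For archimedean ℓ-ideals `I, J` of a bal-algebra, if `ar(I + J) = A` (i.e.,
the join of `I` and `J` in the lattice of archimedean ℓ-ideals is all of `A`),
then already `I + J = A`. -/
theorem add_eq_top_of_archHull_add_eq_top {A : Type*} [CommRing A] [Lattice A]
    [Algebra ℝ A] (hA : IsBal A) (I J : Ideal A)
    (hI : IsLIdeal I) (hIa : IsArchLIdeal I) (hJ : IsLIdeal J) (hJa : IsArchLIdeal J)
    (h : archHull ((I + J : Ideal A) : Set A) = ⊤) :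
    I + J = ⊤ :=
  add_eq_top_of_archHull_add_eq_top_general hA I J hI hJ h
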